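/- Let n ≥ 3 be odd and let T be a tree on n vertices with domination number ⌊n/2⌋ = (n−1)/2 that minimizes the spectral radius among all connected graphs on n vertices with domination number ⌊n/2⌋. Then ρ(T) < 1 + √2. -/

import Mathlib

/-- `D` is a dominating set of `G`: every vertex not in `D` is adjacent to a vertex of `D`. -/
def IsDomSet {V : Type*} (G : SimpleGraph V) (D : Set V) : Prop :=
  ∀ v : V, v ∉ D → ∃ u ∈ D, G.Adj u v

/-- The domination number of `G`: minimum cardinality of a dominating set. -/
noncomputable def domNum {V : Type*} [Fintype V] (G : SimpleGraph V) : ℕ :=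
  sInf {k | ∃ D : Set V, IsDomSet G D ∧ D.ncard = k}

/-- The spectral radius of a finite simple graph: the largest eigenvalue of its (real)
adjacency matrix, expressed as the supremum of the real spectrum. -/
noncomputable def specRad {V : Type*} [Finite V] (G : SimpleGraph V) : ℝ :=
  letI := Fintype.ofFinite V
  letI := Classical.decEq V
  letI := Classical.decRel G.Adj
  sSup (spectrum ℝ (G.adjMatrix ℝ))

/-- The caterpillar `T^{d+1}_{i,j}`: a path `u₀ u₁ ⋯ u_d` on `d+1` vertices (the `Sum.inl`
part), with one pendant vertex attached to each of the first `i` path vertices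
(indexed by `Fin i`) and one pendant vertex attached to each of the last `j` path vertices
(indexed by `Fin j`). It has `i + j + d + 1` vertices. -/
def Tcat (d i j : ℕ) : SimpleGraph (Fin (d + 1) ⊕ (Fin i ⊕ Fin j)) :=
  SimpleGraph.fromRel (fun a b =>
    match a, b with
    | Sum.inl u, Sum.inl v => (u : ℕ) + 1 = (v : ℕ)
    | Sum.inl u, Sum.inr (Sum.inl p) => (u : ℕ) = (p : ℕ)
    | Sum.inl u, Sum.inr (Sum.inr q) => (u : ℕ) = d + 1 - j + (q : ℕ)
    | _, _ => False)




open Matrix in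
lemma sSup_spectrum_lt {n : ℕ} [NeZero n] {A : Matrix (Fin n) (Fin n) ℝ}
    (hA : A.IsHermitian) (h0 : ∀ i j, 0 ≤ A i j) (x : Fin n → ℝ) (hx : ∀ i, 0 < x i)
    {c : ℝ} (h : ∀ i, A.mulVec x i < c * x i) :
    sSup (spectrum ℝ A) < c := by
  have key : ∀ μ ∈ spectrum ℝ A, μ < c := by
    intro μ hμ
    rw [← AlgEquiv.spectrum_eq Matrix.toLinAlgEquiv' A,
      ← Module.End.hasEigenvalue_iff_mem_spectrum] at hμ
    obtain ⟨v, hv⟩ := hμ.exists_hasEigenvector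
    have hv0 : v ≠ 0 := hv.right
    have hmul : A.mulVec v = μ • v := by
      have := hv.apply_eq_smul
      simpa [Matrix.toLinAlgEquiv'_apply] using this
    obtain ⟨i, -, hi⟩ := Finset.exists_max_image Finset.univ
      (fun j => |v j| / x j) ⟨⟨0, Nat.pos_of_ne_zero (NeZero.ne n)⟩, Finset.mem_univ _⟩
    have hvi : 0 < |v i| := by
      obtain ⟨j, hj⟩ := Function.ne_iff.mp hv0
      have h1 : 0 < |v j| / x j := div_pos (abs_pos.mpr hj) (hx j)
      have h2 : 0 < |v i| / x i := lt_of_lt_of_le h1 (hi j (Finset.mem_univ j))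
      rcases div_pos_iff.mp h2 with ⟨h3, -⟩ | ⟨-, h4⟩
      · exact h3
      · exact absurd (hx i) (not_lt.mpr h4.le)
    have hbound : ∀ j, |v j| ≤ (|v i| / x i) * x j := by
      intro j
      have h1 := hi j (Finset.mem_univ j)
      calc |v j| = (|v j| / x j) * x j := by
            rw [div_mul_eq_mul_div, mul_div_assoc, div_self (hx j).ne', mul_one]
        _ ≤ (|v i| / x i) * x j := mul_le_mul_of_nonneg_right h1 (hx j).le
    have habs : |μ| * |v i| < c * |v i| := by
      have h1 : μ * v i = A.mulVec v i := by rw [hmul]; simp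
      have h2 : |μ * v i| ≤ ∑ j, A i j * |v j| := by
        rw [h1, Matrix.mulVec, dotProduct]
        refine (Finset.abs_sum_le_sum_abs _ _).trans ?_
        refine Finset.sum_le_sum fun j _ => ?_
        rw [abs_mul, abs_of_nonneg (h0 i j)]
      have h3 : ∑ j, A i j * |v j| ≤ (|v i| / x i) * A.mulVec x i := by
        rw [Matrix.mulVec, dotProduct, Finset.mul_sum]
        refine Finset.sum_le_sum fun j _ => ?_
        calc A i j * |v j| ≤ A i j * ((|v i| / x i) * x j) :=
              mul_le_mul_of_nonneg_left (hbound j) (h0 i j)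
          _ = |v i| / x i * (A i j * x j) := by ring
      have h4 : (|v i| / x i) * A.mulVec x i < (|v i| / x i) * (c * x i) :=
        mul_lt_mul_of_pos_left (h i) (div_pos hvi (hx i))
      have h5 : (|v i| / x i) * (c * x i) = c * |v i| := by
        have hxi : x i ≠ 0 := (hx i).ne'
        field_simp
      calc |μ| * |v i| = |μ * v i| := (abs_mul _ _).symm
        _ ≤ ∑ j, A i j * |v j| := h2
        _ ≤ (|v i| / x i) * A.mulVec x i := h3
        _ < (|v i| / x i) * (c * x i) := h4
        _ = c * |v i| := h5
    have : |μ| < c := lt_of_mul_lt_mul_right habs (abs_nonneg _)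
    exact (le_abs_self μ).trans_lt this
  have hne : (spectrum ℝ A).Nonempty :=
    ⟨hA.eigenvalues ⟨0, Nat.pos_of_ne_zero (NeZero.ne n)⟩,
      hA.eigenvalues_mem_spectrum_real _⟩
  exact ((Matrix.finite_spectrum A).csSup_lt_iff hne).mpr key



lemma specRad_eq {n : ℕ} (G : SimpleGraph (Fin n)) [DecidableRel G.Adj] :
    specRad G = sSup (spectrum ℝ (G.adjMatrix ℝ)) := by
  unfold specRad; congr!

lemma adjMatrix_isHermitian {n : ℕ} (G : SimpleGraph (Fin n)) [DecidableRel G.Adj] :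
    (G.adjMatrix ℝ).IsHermitian := by
  refine Matrix.ext fun i j => ?_
  simp only [Matrix.conjTranspose_apply, SimpleGraph.adjMatrix_apply, star_trivial]
  by_cases h : G.Adj i j
  · rw [if_pos h, if_pos (G.adj_symm h)]
  · rw [if_neg h, if_neg (fun h' => h (G.adj_symm h'))]


def fp (k i : ℕ) : ℝ := ((i : ℝ) + 1) * ((k : ℝ) + 1 - (i : ℝ))

noncomputable def xv (n k : ℕ) (mu : ℝ) : Fin n → ℝ := fun v =>
  if (v : ℕ) < k then fp k (v : ℕ) else mu * fp k (min ((v : ℕ) - k) (k - 1))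

lemma xv_mk_path {n k : ℕ} (mu : ℝ) {m : ℕ} (hm : m < n) (h : m < k) :
    xv n k mu ⟨m, hm⟩ = fp k m := if_pos h

lemma xv_mk_pend {n k : ℕ} (mu : ℝ) {m : ℕ} (hm : m < n) (h1 : ¬ m < k) {p : ℕ}
    (hp : min (m - k) (k - 1) = p) : xv n k mu ⟨m, hm⟩ = mu * fp k p := by
  show (if m < k then fp k m else mu * fp k (min (m - k) (k - 1))) = mu * fp k p
  rw [if_neg h1, hp]

lemma fp_pos {k i : ℕ} (h : i < k) : 0 < fp k i := by
  have h1 : (i : ℝ) + 1 ≤ (k : ℝ) := by exact_mod_cast h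
  have h2 : (0 : ℝ) ≤ i := Nat.cast_nonneg i
  unfold fp; nlinarith

lemma fp_le {k i : ℕ} (h : i < k) : fp k i ≤ (((k : ℝ) + 2) / 2) ^ 2 := by
  unfold fp; nlinarith [sq_nonneg ((i : ℝ) + 1 - ((k : ℝ) + 1 - (i : ℝ)))]



/-- Auxiliary graph: path `0,…,k-1`, pendant `i+k` at each `i < k`, extra pendant `2k` at `k-1`. -/
def Gk (n k : ℕ) : SimpleGraph (Fin n) :=
  SimpleGraph.fromRel (fun a b =>
    ((b : ℕ) = (a : ℕ) + 1 ∧ (b : ℕ) < k) ∨ ((b : ℕ) = (a : ℕ) + k ∧ (a : ℕ) < k) ∨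
      ((a : ℕ) + 1 = k ∧ (b : ℕ) = 2 * k))

lemma Gk_adj_cases {n k : ℕ} {a b : Fin n} (h : (Gk n k).Adj a b) :
    (a : ℕ) ≠ (b : ℕ) ∧
    (((b : ℕ) = (a : ℕ) + 1 ∧ (b : ℕ) < k) ∨ ((a : ℕ) = (b : ℕ) + 1 ∧ (a : ℕ) < k) ∨
     ((b : ℕ) = (a : ℕ) + k ∧ (a : ℕ) < k) ∨ ((a : ℕ) = (b : ℕ) + k ∧ (b : ℕ) < k) ∨
     ((a : ℕ) + 1 = k ∧ (b : ℕ) = 2 * k) ∨ ((b : ℕ) + 1 = k ∧ (a : ℕ) = 2 * k)) := by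
  rw [Gk, SimpleGraph.fromRel_adj] at h
  obtain ⟨hne, h⟩ := h
  refine ⟨fun hv => hne (Fin.ext hv), ?_⟩
  tauto

lemma Gk_adj_of {n k : ℕ} {a b : Fin n}
    (hne : (a : ℕ) ≠ (b : ℕ))
    (h : ((b : ℕ) = (a : ℕ) + 1 ∧ (b : ℕ) < k) ∨ ((b : ℕ) = (a : ℕ) + k ∧ (a : ℕ) < k) ∨
      ((a : ℕ) + 1 = k ∧ (b : ℕ) = 2 * k)) :
    (Gk n k).Adj a b := by
  rw [Gk, SimpleGraph.fromRel_adj]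
  exact ⟨fun hv => hne (by rw [hv]), Or.inl h⟩

lemma Gk_connected {n k : ℕ} (hn : n = 2 * k + 1) (hk : 1 ≤ k) : (Gk n k).Connected := by
  have h0 : (0 : ℕ) < n := by omega
  have key : ∀ m, ∀ hm : m < n, (Gk n k).Reachable ⟨0, h0⟩ ⟨m, hm⟩ := by
    intro m
    induction m using Nat.strong_induction_on with
    | _ m ih =>
      intro hm
      rcases Nat.lt_or_ge m k with hmk | hmk
      · rcases Nat.eq_zero_or_pos m with rfl | hm0
        · rfl
        · have hprev : m - 1 < n := by omega
          refine (ih (m - 1) (by omega) hprev).trans ?_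
          exact (Gk_adj_of (a := (⟨m - 1, hprev⟩ : Fin n)) (b := ⟨m, hm⟩)
            (by first | omega | (simp only [Fin.val_mk]; omega)) (Or.inl ⟨by first | omega | (simp only [Fin.val_mk]; omega), by simpa using hmk⟩)).reachable
      · rcases Nat.lt_or_ge m (2 * k) with hm2 | hm2
        · have hprev : m - k < n := by omega
          refine (ih (m - k) (by omega) hprev).trans ?_
          exact (Gk_adj_of (a := (⟨m - k, hprev⟩ : Fin n)) (b := ⟨m, hm⟩)
            (by first | omega | (simp only [Fin.val_mk]; omega)) (Or.inr (Or.inl ⟨by first | omega | (simp only [Fin.val_mk]; omega), by first | omega | (simp only [Fin.val_mk]; omega)⟩))).reachable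
        · have hm2k : m = 2 * k := by omega
          have hprev : k - 1 < n := by omega
          refine (ih (k - 1) (by omega) hprev).trans ?_
          exact (Gk_adj_of (a := (⟨k - 1, hprev⟩ : Fin n)) (b := ⟨m, hm⟩)
            (by first | omega | (simp only [Fin.val_mk]; omega)) (Or.inr (Or.inr ⟨by first | omega | (simp only [Fin.val_mk]; omega), by first | omega | (simp only [Fin.val_mk]; omega)⟩))).reachable
  rw [SimpleGraph.connected_iff_exists_forall_reachable]
  refine ⟨⟨0, h0⟩, fun v => ?_⟩
  have hv := key v.val v.isLt
  simpa using hv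

lemma Gk_domNum {n k : ℕ} (hn : n = 2 * k + 1) (hk : 1 ≤ k) : domNum (Gk n k) = k := by
  set S := {m | ∃ D : Set (Fin n), IsDomSet (Gk n k) D ∧ D.ncard = m} with hS
  have hmem : k ∈ S := by
    refine ⟨Set.range (fun i : Fin k => (⟨i.val, by omega⟩ : Fin n)), ?_, ?_⟩
    · intro v hv
      have hvk : k ≤ (v : ℕ) := by
        by_contra hlt
        exact hv ⟨⟨v.val, by omega⟩, Fin.ext rfl⟩
      rcases Nat.lt_or_ge (v : ℕ) (2 * k) with hv2 | hv2
      · refine ⟨⟨v.val - k, by omega⟩, ⟨⟨v.val - k, by omega⟩, Fin.ext rfl⟩, ?_⟩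
        exact Gk_adj_of (by first | omega | (simp only [Fin.val_mk]; omega)) (Or.inr (Or.inl ⟨by first | omega | (simp only [Fin.val_mk]; omega), by first | omega | (simp only [Fin.val_mk]; omega)⟩))
      · refine ⟨⟨k - 1, by omega⟩, ⟨⟨k - 1, by omega⟩, Fin.ext rfl⟩, ?_⟩
        exact Gk_adj_of (by first | omega | (simp only [Fin.val_mk]; omega)) (Or.inr (Or.inr ⟨by first | omega | (simp only [Fin.val_mk]; omega), by first | omega | (simp only [Fin.val_mk]; omega)⟩))
    · have hinj : Function.Injective (fun i : Fin k => (⟨i.val, by omega⟩ : Fin n)) := by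
        intro i j hij
        exact Fin.ext (by simpa [Fin.ext_iff] using hij)
      rw [← Set.image_univ, Set.ncard_image_of_injective _ hinj, Set.ncard_univ,
        Nat.card_eq_fintype_card, Fintype.card_fin]
  have hlow : ∀ m ∈ S, k ≤ m := by
    rintro m ⟨D, hDdom, rfl⟩
    classical
    set F : Fin k → Fin n := fun i =>
      if (⟨i.val + k, by omega⟩ : Fin n) ∈ D then (⟨i.val + k, by omega⟩ : Fin n)
      else (⟨i.val, by omega⟩ : Fin n) with hF
    have hFD : ∀ i, F i ∈ D := by
      intro i
      simp only [hF]
      split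
      · assumption
      · next hnot =>
        obtain ⟨u, huD, hadj⟩ := hDdom _ hnot
        obtain ⟨hne, hcs⟩ := Gk_adj_cases hadj
        have hu : (u : ℕ) = i.val := by
          simp only [] at hcs hne
          have := u.isLt
          have := i.isLt
          omega
        have : u = (⟨i.val, by omega⟩ : Fin n) := Fin.ext (by simpa using hu)
        rwa [this] at huD
    have hFval : ∀ i, (F i : ℕ) = i.val ∨ (F i : ℕ) = i.val + k := by
      intro i
      simp only [hF]
      split
      · right; rfl
      · left; rfl
    have hFinj : Function.Injective F := by
      intro i j hij
      have h1 := hFval i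
      have h2 := hFval j
      have : (F i : ℕ) = (F j : ℕ) := by rw [hij]
      have hi := i.isLt
      have hj := j.isLt
      exact Fin.ext (by omega)
    have hsub : Set.range F ⊆ D := by rintro x ⟨i, rfl⟩; exact hFD i
    calc k = (Set.range F).ncard := by
            rw [← Set.image_univ, Set.ncard_image_of_injective _ hFinj, Set.ncard_univ,
              Nat.card_eq_fintype_card, Fintype.card_fin]
      _ ≤ D.ncard := Set.ncard_le_ncard hsub D.toFinite
  refine le_antisymm (Nat.sInf_le hmem) ?_
  have := Nat.sInf_mem ⟨k, hmem⟩
  exact hlow _ this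
section GkSpec

set_option maxHeartbeats 2000000 in
lemma Gk_spec {n k : ℕ} (hn : n = 2 * k + 1) (hk : 1 ≤ k) :
    specRad (Gk n k) < 1 + Real.sqrt 2 := by
  classical
  haveI : NeZero n := ⟨by omega⟩
  rw [specRad_eq]
  have hs2 : Real.sqrt 2 ^ 2 = 2 := Real.sq_sqrt (by norm_num)
  have hs0 : (0 : ℝ) ≤ Real.sqrt 2 := Real.sqrt_nonneg 2
  have hs1 : (1 : ℝ) < Real.sqrt 2 := by nlinarith
  have hs15 : Real.sqrt 2 < 1.5 := by nlinarith
  set s := Real.sqrt 2 with hsdef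
  have hK1 : (1 : ℝ) ≤ (k : ℝ) := by exact_mod_cast hk
  have hKp : (0 : ℝ) < (k : ℝ) + 2 := by linarith
  set D : ℝ := 1 / ((k : ℝ) + 2) ^ 2 with hDdef
  have hDpos : 0 < D := by rw [hDdef]; positivity
  have hD1 : D * ((k : ℝ) + 2) ^ 2 = 1 := by rw [hDdef]; field_simp
  set mu : ℝ := s - 1 + D with hmudef
  have hmupos : 0 < mu := by rw [hmudef]; linarith
  clear_value s
  clear_value D
  clear_value mu
  have hx : ∀ v : Fin n, 0 < xv n k mu v := by
    intro v
    rw [xv]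
    split
    · exact fp_pos ‹_›
    · exact mul_pos hmupos (fp_pos (by omega))
  refine sSup_spectrum_lt (adjMatrix_isHermitian _)
    (fun i j => by by_cases h : (Gk n k).Adj i j <;> simp [h]) (xv n k mu) hx ?_
  intro i
  rw [SimpleGraph.adjMatrix_mulVec_apply]
  have hsumle : ∀ N : Finset (Fin n), (∀ j, (Gk n k).Adj i j → j ∈ N) →
      ∑ u ∈ (Gk n k).neighborFinset i, xv n k mu u ≤ ∑ u ∈ N, xv n k mu u := fun N hN =>
    Finset.sum_le_sum_of_subset_of_nonneg
      (fun j hj => hN j ((SimpleGraph.mem_neighborFinset _ _ _).mp hj))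
      (fun j _ _ => (hx j).le)
  obtain ⟨iv, hiv⟩ := i
  by_cases hik : iv < k
  · -- path vertex
    by_cases hk1 : k = 1
    · subst hk1
      have hiv0 : iv = 0 := by omega
      subst hiv0
      have h1 : (1 : ℕ) < n := by omega
      have h2 : (2 : ℕ) < n := by omega
      refine lt_of_le_of_lt (hsumle {⟨1, h1⟩, ⟨2, h2⟩} ?_) ?_
      · intro j hj
        obtain ⟨hne, hcs⟩ := Gk_adj_cases hj
        have hjlt := j.isLt
        simp only [Fin.val_mk] at hcs hne
        simp only [Finset.mem_insert, Finset.mem_singleton, Fin.ext_iff, Fin.val_mk]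
        omega
      · rw [Finset.sum_pair (by simp only [ne_eq, Fin.ext_iff, Fin.val_mk]; omega),
          xv_mk_pend mu h1 (by omega) (p := 0) (by omega),
          xv_mk_pend mu h2 (by omega) (p := 0) (by omega),
          xv_mk_path mu hiv (by omega)]
        have hfp0 : fp 1 0 = 2 := by norm_num [fp]
        rw [hfp0]
        nlinarith [hD1, hDpos]
    · have hk2 : 2 ≤ k := by omega
      have ek1 : ((k - 1 : ℕ) : ℝ) = (k : ℝ) - 1 := by
        rw [Nat.cast_sub hk, Nat.cast_one]
      have ek2 : ((k - 2 : ℕ) : ℝ) = (k : ℝ) - 2 := by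
        rw [Nat.cast_sub hk2, Nat.cast_two]
      have efp0 : fp k 0 = (k : ℝ) + 1 := by unfold fp; push_cast; ring
      have efp1 : fp k 1 = 2 * (k : ℝ) := by unfold fp; push_cast; ring
      have efpk1 : fp k (k - 1) = 2 * (k : ℝ) := by unfold fp; rw [ek1]; ring
      have efpk2 : fp k (k - 2) = 3 * ((k : ℝ) - 1) := by unfold fp; rw [ek2]; ring
      by_cases hi0 : iv = 0
      · subst hi0
        have h1 : (1 : ℕ) < n := by omega
        have h2 : k < n := by omega
        refine lt_of_le_of_lt (hsumle {⟨1, h1⟩, ⟨k, h2⟩} ?_) ?_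
        · intro j hj
          obtain ⟨hne, hcs⟩ := Gk_adj_cases hj
          have hjlt := j.isLt
          simp only [Fin.val_mk] at hcs hne
          simp only [Finset.mem_insert, Finset.mem_singleton, Fin.ext_iff, Fin.val_mk]
          omega
        · rw [Finset.sum_pair (by simp only [ne_eq, Fin.ext_iff, Fin.val_mk]; omega),
            xv_mk_path mu h1 (by omega),
            xv_mk_pend mu h2 (by omega) (p := 0) (by omega),
            xv_mk_path mu hiv (by omega), efp0, efp1]
          nlinarith [hD1, hDpos, mul_pos hDpos (mul_pos hKp hKp)]
      · by_cases hlast : iv = k - 1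
        · subst hlast
          have h1 : k - 2 < n := by omega
          have h2 : 2 * k - 1 < n := by omega
          have h3 : 2 * k < n := by omega
          refine lt_of_le_of_lt
            (hsumle {⟨k - 2, h1⟩, ⟨2 * k - 1, h2⟩, ⟨2 * k, h3⟩} ?_) ?_
          · intro j hj
            obtain ⟨hne, hcs⟩ := Gk_adj_cases hj
            have hjlt := j.isLt
            simp only [Fin.val_mk] at hcs hne
            simp only [Finset.mem_insert, Finset.mem_singleton, Fin.ext_iff, Fin.val_mk]
            omega
          · rw [Finset.sum_insert (by
              simp only [Finset.mem_insert, Finset.mem_singleton, Fin.ext_iff, Fin.val_mk]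
              omega),
              Finset.sum_pair (by simp only [ne_eq, Fin.ext_iff, Fin.val_mk]; omega),
              xv_mk_path mu h1 (by omega),
              xv_mk_pend mu h2 (by omega) (p := k - 1) (by omega),
              xv_mk_pend mu h3 (by omega) (p := k - 1) (by omega),
              xv_mk_path mu hiv (by omega), efpk1, efpk2]
            have hKD : 4 * ((k : ℝ) * D) < 3 := by nlinarith [hD1, hDpos]
            nlinarith [hD1, hDpos, hKD]
        · -- interior: 1 ≤ iv ≤ k - 2
          have hiv1 : 1 ≤ iv := by omega
          have hivk : iv ≤ k - 2 := by omega
          have eiv : ((iv - 1 : ℕ) : ℝ) = (iv : ℝ) - 1 := by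
            rw [Nat.cast_sub hiv1, Nat.cast_one]
          have h1 : iv - 1 < n := by omega
          have h2 : iv + 1 < n := by omega
          have h3 : iv + k < n := by omega
          refine lt_of_le_of_lt
            (hsumle {⟨iv - 1, h1⟩, ⟨iv + 1, h2⟩, ⟨iv + k, h3⟩} ?_) ?_
          · intro j hj
            obtain ⟨hne, hcs⟩ := Gk_adj_cases hj
            have hjlt := j.isLt
            simp only [Fin.val_mk] at hcs hne
            simp only [Finset.mem_insert, Finset.mem_singleton, Fin.ext_iff, Fin.val_mk]
            omega
          · rw [Finset.sum_insert (by
              simp only [Finset.mem_insert, Finset.mem_singleton, Fin.ext_iff, Fin.val_mk]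
              omega),
              Finset.sum_pair (by simp only [ne_eq, Fin.ext_iff, Fin.val_mk]; omega),
              xv_mk_path mu h1 (by omega),
              xv_mk_path mu h2 (by omega),
              xv_mk_pend mu h3 (by omega) (p := iv) (by omega),
              xv_mk_path mu hiv hik]
            have hsum2 : fp k (iv - 1) + fp k (iv + 1) = 2 * fp k iv - 2 := by
              unfold fp; rw [eiv]; push_cast; ring
            have hfple : fp k iv ≤ (((k : ℝ) + 2) / 2) ^ 2 := fp_le hik
            have hfppos : 0 < fp k iv := fp_pos hik
            have hDfp : D * fp k iv ≤ 1 / 4 := by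
              have h := mul_le_mul_of_nonneg_left hfple hDpos.le
              nlinarith [hD1]
            have hmufp : mu * fp k iv = (s - 1 + D) * fp k iv := by rw [hmudef]
            nlinarith [hsum2, hmufp, hDfp, hfppos]
  · -- pendant vertex
    have hone : (1 : ℝ) < (1 + s) * mu := by nlinarith [hDpos]
    by_cases h2k : iv < 2 * k
    · have h1 : iv - k < n := by omega
      refine lt_of_le_of_lt (hsumle {⟨iv - k, h1⟩} ?_) ?_
      · intro j hj
        obtain ⟨hne, hcs⟩ := Gk_adj_cases hj
        have hjlt := j.isLt
        simp only [Fin.val_mk] at hcs hne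
        simp only [Finset.mem_singleton, Fin.ext_iff, Fin.val_mk]
        omega
      · rw [Finset.sum_singleton, xv_mk_path mu h1 (by omega),
          xv_mk_pend mu hiv hik (p := iv - k) (by omega)]
        have hfppos : 0 < fp k (iv - k) := fp_pos (by omega)
        nlinarith [mul_lt_mul_of_pos_right hone hfppos]
    · have hiv2k : iv = 2 * k := by omega
      have h1 : k - 1 < n := by omega
      refine lt_of_le_of_lt (hsumle {⟨k - 1, h1⟩} ?_) ?_
      · intro j hj
        obtain ⟨hne, hcs⟩ := Gk_adj_cases hj
        have hjlt := j.isLt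
        simp only [Fin.val_mk] at hcs hne
        simp only [Finset.mem_singleton, Fin.ext_iff, Fin.val_mk]
        omega
      · rw [Finset.sum_singleton, xv_mk_path mu h1 (by omega),
          xv_mk_pend mu hiv hik (p := k - 1) (by omega)]
        have hfppos : 0 < fp k (k - 1) := fp_pos (by omega)
        nlinarith [mul_lt_mul_of_pos_right hone hfppos]

end GkSpec


/-- For odd `n ≥ 3`, if `T` is a tree on `n` vertices with domination number
`⌊n/2⌋ = (n−1)/2` which minimizes the spectral radius among all connected graphs on `n`
vertices with domination number `⌊n/2⌋`, then `ρ(T) < 1 + √2`. -/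
theorem minimizer_specRad_lt (n : ℕ) (hodd : Odd n) (h3 : 3 ≤ n)
    (T : SimpleGraph (Fin n)) (hT : T.IsTree)
    (hdom : domNum T = n / 2)
    (hmin : ∀ G : SimpleGraph (Fin n), G.Connected → domNum G = n / 2 →
      specRad T ≤ specRad G) :
    specRad T < 1 + Real.sqrt 2 := by
  obtain ⟨m, hm⟩ := hodd
  have hk : 1 ≤ m := by omega
  have hn : n = 2 * m + 1 := by omega
  have hdom2 : domNum (Gk n m) = n / 2 := by rw [Gk_domNum hn hk]; omega
  exact lt_of_le_of_lt (hmin (Gk n m) (Gk_connected hn hk) hdom2) (Gk_spec hn hk)
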